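/- Let N be an even positive integer and m an integer such that either (i) m ≡ 0 (mod 4), or (ii) m ≡ 2 (mod 4) and N ≡ 2 (mod 4). Let v := exp(πi/N), ω := exp(πi/(4N)), and t_j := i^{N−1−j}·ω^{(N+j)²}. Then for every integer l with 0 ≤ l ≤ N−1, ∑_{j=1, j odd}^{N−1} t_j^m · D_m(j,l) = (mN/4) · ∑_{j=1, j odd}^{N−1} exp(πi m j²/(4N)) · S(j−l, j+l). (This is the identity underlying Theorem 2 of the paper, relating the Kashaev invariant of the (m,2)-cable K^{(m,2)} of any knot K to the colored Jones polynomials of K with framing m/2.) -/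

import Mathlib

open Complex

/-- `v = exp(πi/N)`. -/
noncomputable def vN (N : ℕ) : ℂ := Complex.exp (Real.pi * Complex.I / N)

/-- `{n} = v^n - v^{-n}` at `v = exp(πi/N)`. -/
noncomputable def br (N : ℕ) (n : ℤ) : ℂ := vN N ^ n - vN N ^ (-n)

/-- `A(j,k) = {j-k}{j+k}`. -/
noncomputable def AA (N : ℕ) (j k : ℤ) : ℂ := br N (j - k) * br N (j + k)

/-- `D_m(j,l)` from the context. -/
noncomputable def DD (N : ℕ) (m j : ℤ) (l : ℕ) : ℂ :=
  (vN N ^ j + vN N ^ (-j)) *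
      ((∏ k ∈ Finset.Icc 1 l, AA N j (k : ℤ)) +
        2 * (br N j) ^ 2 *
          ∑ k ∈ Finset.Icc 1 l, ∏ k' ∈ (Finset.Icc 1 l).erase k, AA N j (k' : ℤ)) +
    ((m : ℂ) * (j : ℂ) / 2) * br N j * ∏ k ∈ Finset.Icc 1 l, AA N j (k : ℤ)


/-- `S(k,l) = ∏_{k ≤ r ≤ l} {r}`. -/
noncomputable def SS (N : ℕ) (k l : ℤ) : ℂ := ∏ r ∈ Finset.Icc k l, br N r

/-- `ω = exp(πi/(4N))`. -/
noncomputable def om (N : ℕ) : ℂ := Complex.exp (Real.pi * Complex.I / (4 * N))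

/-- `t_j = i^{N-1-j} ω^{(N+j)²}`. -/
noncomputable def tt (N : ℕ) (j : ℤ) : ℂ :=
  Complex.I ^ ((N : ℤ) - 1 - j) * om N ^ (((N : ℤ) + j) ^ 2)

/-!
The map `j ↦ N - j` is an involution of the odd integers in `[1, N - 1]`. Since `v^N = -1`,
it fixes `{j}` and every `A(j, k)` and negates `v^j + v^{-j}`, so in `D_m(j,l) + D_m(N-j,l)`
everything cancels except `(mN/2) {j} ∏ A(j,k) = (mN/2) S(j-l, j+l)`. On the other side,
`ω` has order `8N`, and the congruence conditions on `m` and `N` are what make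
`t_j^m = ω^{m j²}` and `ω^{m (N-j)²} = ω^{m j²}` for odd `j`. Summing over the orbits of the
involution gives the identity.
-/

open Finset

theorem Finset.sum_eq_sum_of_involution_of_add_eq {ι M : Type*} [AddCommMonoid M]
    [IsAddTorsionFree M] {s : Finset ι} {f g : ι → M} (σ : ι → ι)
    (hσ : ∀ i ∈ s, σ i ∈ s) (hσσ : ∀ i ∈ s, σ (σ i) = i)
    (h : ∀ i ∈ s, f i + f (σ i) = g i + g (σ i)) :
    ∑ i ∈ s, f i = ∑ i ∈ s, g i := by
  have sum_comp (F : ι → M) : ∑ i ∈ s, F (σ i) = ∑ i ∈ s, F i :=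
    sum_nbij' σ σ hσ hσ hσσ hσσ fun _ _ => rfl
  apply IsAddTorsionFree.nsmul_right_injective two_ne_zero
  simp only [two_nsmul]
  calc ∑ i ∈ s, f i + ∑ i ∈ s, f i = ∑ i ∈ s, (f i + f (σ i)) := by
        rw [sum_add_distrib, sum_comp]
    _ = ∑ i ∈ s, (g i + g (σ i)) := sum_congr rfl h
    _ = ∑ i ∈ s, g i + ∑ i ∈ s, g i := by rw [sum_add_distrib, sum_comp]

theorem Finset.prod_Icc_sub_add {M : Type*} [CommMonoid M] (f : ℤ → M) (j : ℤ) (l : ℕ) :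
    ∏ r ∈ Icc (j - l) (j + l), f r = f j * ∏ k ∈ Icc 1 l, (f (j - k) * f (j + k)) := by
  induction l with
  | zero => simp
  | succ l ih =>
    have hIcc : Icc (j - (l + 1 : ℕ)) (j + (l + 1 : ℕ)) =
        insert (j - (l + 1 : ℕ)) (insert (j + (l + 1 : ℕ)) (Icc (j - l) (j + l))) := by
      ext r
      simp only [mem_insert, mem_Icc]
      omega
    rw [hIcc, prod_insert (by simp only [mem_insert, mem_Icc]; omega),
      prod_insert (by simp only [mem_Icc]; omega), ih, prod_Icc_succ_top (by omega)]
    ac_rfl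

section Symmetry

variable {N : ℕ}

lemma vN_ne_zero : vN N ≠ 0 := Complex.exp_ne_zero _

lemma vN_zpow_natCast (hN : N ≠ 0) : vN N ^ (N : ℤ) = -1 := by
  rw [vN, ← Complex.exp_int_mul, Int.cast_natCast,
    mul_div_cancel₀ _ (Nat.cast_ne_zero.mpr hN), Complex.exp_pi_mul_I]

lemma vN_zpow_N_sub (hN : N ≠ 0) (n : ℤ) : vN N ^ ((N : ℤ) - n) = -vN N ^ (-n) := by
  rw [sub_eq_add_neg, zpow_add₀ vN_ne_zero, vN_zpow_natCast hN, neg_one_mul]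

lemma vN_zpow_neg_N_sub (hN : N ≠ 0) (n : ℤ) : vN N ^ (-((N : ℤ) - n)) = -vN N ^ n := by
  rw [neg_sub, sub_eq_add_neg, zpow_add₀ vN_ne_zero, zpow_neg, vN_zpow_natCast hN]
  simp

lemma br_N_sub (hN : N ≠ 0) (n : ℤ) : br N ((N : ℤ) - n) = br N n := by
  rw [br, br, vN_zpow_N_sub hN, vN_zpow_neg_N_sub hN]
  ring

lemma AA_N_sub (hN : N ≠ 0) (j k : ℤ) : AA N ((N : ℤ) - j) k = AA N j k := by
  rw [AA, AA, show (N : ℤ) - j - k = N - (j + k) by ring,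
    show (N : ℤ) - j + k = N - (j - k) by ring, br_N_sub hN, br_N_sub hN, mul_comm]

lemma SS_sub_add (j : ℤ) (l : ℕ) :
    SS N (j - l) (j + l) = br N j * ∏ k ∈ Icc 1 l, AA N j k :=
  prod_Icc_sub_add _ j l

lemma DD_add_DD_N_sub (hN : N ≠ 0) (m j : ℤ) (l : ℕ) :
    DD N m j l + DD N m ((N : ℤ) - j) l = (m * N / 2 : ℂ) * br N j * ∏ k ∈ Icc 1 l, AA N j k := by
  simp only [DD, AA_N_sub hN, br_N_sub hN, vN_zpow_N_sub hN, vN_zpow_neg_N_sub hN]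
  push_cast
  ring

end Symmetry

section EighthRoots

variable {N : ℕ}

lemma om_ne_zero : om N ≠ 0 := Complex.exp_ne_zero _

lemma om_zpow_eq_exp (a : ℤ) : om N ^ a = Complex.exp (Real.pi * Complex.I * a / (4 * N)) := by
  rw [om, ← Complex.exp_int_mul]
  ring_nf

lemma om_zpow_add_natCast_mul (hN : N ≠ 0) (a : ℤ) {c : ℤ} (hc : 8 ∣ c) :
    om N ^ (a + N * c) = om N ^ a := by
  obtain ⟨d, rfl⟩ := hc
  have h8N : om N ^ (8 * N : ℤ) = 1 := by
    rw [om_zpow_eq_exp, ← Complex.exp_two_pi_mul_I]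
    congr 1
    field_simp
    push_cast
    ring
  rw [zpow_add₀ om_ne_zero, show (N : ℤ) * (8 * d) = 8 * N * d by ring, zpow_mul, h8N, one_zpow,
    mul_one]

lemma om_zpow_two_mul_natCast (hN : N ≠ 0) : om N ^ (2 * N : ℤ) = Complex.I := by
  rw [om_zpow_eq_exp]
  convert Complex.exp_pi_div_two_mul_I using 2
  field_simp
  push_cast
  ring

lemma exp_mul_sq_eq_om_zpow (m x : ℤ) :
    Complex.exp (Real.pi * Complex.I * m * (x : ℂ) ^ 2 / (4 * N)) = om N ^ (m * x ^ 2) := by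
  rw [om_zpow_eq_exp]
  push_cast
  ring_nf

lemma tt_eq_om_zpow (hN : N ≠ 0) (j : ℤ) :
    tt N j = om N ^ (2 * N * ((N : ℤ) - 1 - j) + ((N : ℤ) + j) ^ 2) := by
  rw [tt, ← om_zpow_two_mul_natCast hN, ← zpow_mul, ← zpow_add₀ om_ne_zero]

variable {m : ℤ} (hm : m % 4 = 0 ∨ (m % 4 = 2 ∧ N % 4 = 2))
include hm

lemma eight_dvd_mul {x : ℤ} (hx : 2 ∣ x) (hx4 : N % 4 = 2 → 4 ∣ x) : 8 ∣ m * x := by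
  rcases hm with hm | ⟨hm, hN⟩
  · exact mul_dvd_mul (show (4 : ℤ) ∣ m by omega) hx
  · exact mul_dvd_mul (show (2 : ℤ) ∣ m by omega) (hx4 hN)

lemma tt_zpow_eq_om_zpow (hN : N ≠ 0) (hNeven : Even N) (j : ℤ) :
    tt N j ^ m = om N ^ (m * j ^ 2) := by
  obtain ⟨r, hr⟩ := hNeven
  rw [tt_eq_om_zpow hN, ← zpow_mul, ← om_zpow_add_natCast_mul hN (m * j ^ 2)
    (eight_dvd_mul hm (x := 3 * N - 2) (by omega) (by omega))]
  ring_nf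

lemma om_zpow_mul_N_sub_sq (hN : N ≠ 0) (hNeven : Even N) {j : ℤ} (hj : Odd j) :
    om N ^ (m * ((N : ℤ) - j) ^ 2) = om N ^ (m * j ^ 2) := by
  obtain ⟨r, hr⟩ := hNeven
  obtain ⟨t, rfl⟩ := hj
  rw [← om_zpow_add_natCast_mul hN (m * (2 * t + 1) ^ 2)
    (eight_dvd_mul hm (x := N - 2 * (2 * t + 1)) (by omega) (by omega))]
  ring_nf

end EighthRoots

lemma tt_zpow_mul_DD_add_N_sub (N : ℕ) (hN : N ≠ 0) (hNeven : Even N) {m : ℤ}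
    (hm : m % 4 = 0 ∨ (m % 4 = 2 ∧ N % 4 = 2)) (l : ℕ) {j : ℤ} (hj : Odd j) :
    tt N j ^ m * DD N m j l + tt N (N - j) ^ m * DD N m (N - j) l =
      (m * N / 4 : ℂ) *
          (Complex.exp (Real.pi * Complex.I * m * (j : ℂ) ^ 2 / (4 * N)) * SS N (j - l) (j + l)) +
        (m * N / 4 : ℂ) * (Complex.exp (Real.pi * Complex.I * m * ((N - j : ℤ) : ℂ) ^ 2 / (4 * N)) *
          SS N (N - j - l) (N - j + l)) := by
  calc _ = om N ^ (m * j ^ 2) * (DD N m j l + DD N m ((N : ℤ) - j) l) := by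
        simp only [tt_zpow_eq_om_zpow hm hN hNeven, om_zpow_mul_N_sub_sq hm hN hNeven hj]
        ring
    _ = _ := by
        simp only [exp_mul_sq_eq_om_zpow, om_zpow_mul_N_sub_sq hm hN hNeven hj, SS_sub_add,
          br_N_sub hN, AA_N_sub hN, DD_add_DD_N_sub hN]
        ring

theorem sum_t_pow_D_eq_general (N : ℕ) (hNeven : Even N) (m : ℤ)
    (hm : m % 4 = 0 ∨ (m % 4 = 2 ∧ N % 4 = 2)) (l : ℕ) :
    ∑ j ∈ (Finset.Icc 1 (N - 1)).filter (fun j => Odd j),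
        tt N (j : ℤ) ^ m * DD N m (j : ℤ) l =
      ((m : ℂ) * (N : ℂ) / 4) *
        ∑ j ∈ (Finset.Icc 1 (N - 1)).filter (fun j => Odd j),
          Complex.exp (Real.pi * Complex.I * (m : ℂ) * (j : ℂ) ^ 2 / (4 * (N : ℂ))) *
            SS N ((j : ℤ) - (l : ℤ)) ((j : ℤ) + (l : ℤ)) := by
  have hmem {j : ℕ} : j ∈ (Icc 1 (N - 1)).filter (fun j => Odd j) ↔ 1 ≤ j ∧ j ≤ N - 1 ∧ Odd j := by
    rw [mem_filter, mem_Icc, and_assoc]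
  rw [mul_sum]
  refine sum_eq_sum_of_involution_of_add_eq (N - ·) (fun j hj => ?_) (fun j hj => ?_)
    (fun j hj => ?_) <;> obtain ⟨hj1, hjN, hj⟩ := hmem.mp hj
  · exact hmem.mpr ⟨by omega, by omega, Nat.Even.sub_odd (by omega) hNeven hj⟩
  · omega
  · have key := tt_zpow_mul_DD_add_N_sub N (by omega) hNeven hm l (j := j) (by exact_mod_cast hj)
    push_cast [Nat.cast_sub (by omega : j ≤ N)] at key ⊢
    exact key

/-- The identity underlying Theorem 2 of the paper: for even `N` and `m ≡ 0 (mod 4)`,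
or `m ≡ 2 (mod 4)` and `N ≡ 2 (mod 4)`, and every `0 ≤ l ≤ N-1`,
`∑_{j odd} t_j^m D_m(j,l) = (mN/4) ∑_{j odd} exp(πimj²/(4N)) S(j-l, j+l)`. -/
theorem sum_t_pow_D_eq (N : ℕ) (hN : 0 < N) (hNeven : Even N) (m : ℤ)
    (hm : m % 4 = 0 ∨ (m % 4 = 2 ∧ N % 4 = 2)) (l : ℕ) (hl : l ≤ N - 1) :
    ∑ j ∈ (Finset.Icc 1 (N - 1)).filter (fun j => Odd j),
        tt N (j : ℤ) ^ m * DD N m (j : ℤ) l =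
      ((m : ℂ) * (N : ℂ) / 4) *
        ∑ j ∈ (Finset.Icc 1 (N - 1)).filter (fun j => Odd j),
          Complex.exp (Real.pi * Complex.I * (m : ℂ) * (j : ℂ) ^ 2 / (4 * (N : ℂ))) *
            SS N ((j : ℤ) - (l : ℤ)) ((j : ℤ) + (l : ℤ)) :=
  sum_t_pow_D_eq_general N hNeven m hm l
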